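/- arXiv:1306.2092 — 2 statements merged into one kernel-verified Lean document; each statement's English description precedes it below -/
import Mathlib

section
/- Let f, g ∈ A with f² = g² = -1 and x ∈ A, and set x₊ = ½(x + f x g), x₋ = ½(x - f x g). Then for all α, β ∈ ℝ: exp(α f) · x₊ · exp(β g) = x₊ · exp((β - α) g) = exp((α - β) f) · x₊, and exp(α f) · x₋ · exp(β g) = x₋ · exp((β + α) g) = exp((α + β) f) · x₋. -/
/-!
If `y * g = a * y`, then `y * exp (t • g) = exp (t • a) * y`, so in `exp (s • a) * y * exp (t • g)`
either exponential can be moved past `y` and combined with the other one. Since `f² = g² = -1`,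
`x₊` intertwines `g` with `-f` and `x₋` intertwines `g` with `f`, which accounts for the signs.
-/

open NormedSpace

section Intertwining

variable {A : Type*} [Ring A] {f g : A}

theorem semiconjBy_add_mul_mul (hf : f ^ 2 = -1) (hg : g ^ 2 = -1) (x : A) :
    SemiconjBy (x + f * x * g) g (-f) := by
  have lhs : (x + f * x * g) * g = x * g + f * x * g ^ 2 := by noncomm_ring
  have rhs : -f * (x + f * x * g) = -(f * x) - f ^ 2 * x * g := by noncomm_ring
  rw [SemiconjBy, lhs, rhs, hf, hg]
  noncomm_ring

theorem semiconjBy_sub_mul_mul (hf : f ^ 2 = -1) (hg : g ^ 2 = -1) (x : A) :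
    SemiconjBy (x - f * x * g) g f := by
  have lhs : (x - f * x * g) * g = x * g - f * x * g ^ 2 := by noncomm_ring
  have rhs : f * (x - f * x * g) = f * x - f ^ 2 * x * g := by noncomm_ring
  rw [SemiconjBy, lhs, rhs, hf, hg]
  noncomm_ring

end Intertwining

namespace SemiconjBy

variable {A R : Type*} [NormedRing A] [NormedAlgebra ℚ A] [CompleteSpace A]
  [Semiring R] [Module R A] [SMulCommClass R A A] [IsScalarTower R A A] {y a b : A}

theorem exp_smul_mul_mul_exp_smul_eq_mul_exp (h : SemiconjBy y b a) (s t : R) :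
    exp (s • a) * y * exp (t • b) = y * exp ((s + t) • b) := by
  rw [← (h.smul_right s).exp_right.eq, mul_assoc, add_smul,
    exp_add_of_commute (((Commute.refl b).smul_left s).smul_right t)]

theorem exp_smul_mul_mul_exp_smul_eq_exp_mul (h : SemiconjBy y b a) (s t : R) :
    exp (s • a) * y * exp (t • b) = exp ((s + t) • a) * y := by
  rw [mul_assoc, (h.smul_right t).exp_right.eq, ← mul_assoc, add_smul,
    exp_add_of_commute (((Commute.refl a).smul_left s).smul_right t)]

end SemiconjBy

/-- The general identity `e^{αf} x± e^{βg} = x± e^{(β∓α)g} = e^{(α∓β)f} x±`. -/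
theorem exp_pm_split {A : Type*} [NormedRing A] [NormedAlgebra ℝ A] [CompleteSpace A]
    (f g : A) (hf : f ^ 2 = -1) (hg : g ^ 2 = -1) (x : A) (α β : ℝ) :
    let xp : A := (1 / 2 : ℝ) • (x + f * x * g)
    let xm : A := (1 / 2 : ℝ) • (x - f * x * g)
    (exp (α • f) * xp * exp (β • g) = xp * exp ((β - α) • g) ∧
      exp (α • f) * xp * exp (β • g) = exp ((α - β) • f) * xp) ∧
    (exp (α • f) * xm * exp (β • g) = xm * exp ((β + α) • g) ∧
      exp (α • f) * xm * exp (β • g) = exp ((α + β) • f) * xm) := by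
  intro xp xm
  let : NormedAlgebra ℚ A := NormedAlgebra.restrictScalars ℚ ℝ A
  have hp : SemiconjBy xp g (-f) := (semiconjBy_add_mul_mul hf hg x).smul_left _
  have hm : SemiconjBy xm g f := (semiconjBy_sub_mul_mul hf hg x).smul_left _
  have hαf : α • f = (-α) • -f := (neg_smul_neg α f).symm
  refine ⟨⟨?_, ?_⟩, ?_, ?_⟩
  · rw [hαf, hp.exp_smul_mul_mul_exp_smul_eq_mul_exp, neg_add_eq_sub]
  · rw [hαf, hp.exp_smul_mul_mul_exp_smul_eq_exp_mul, smul_neg, ← neg_smul, neg_add, neg_neg,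
      ← sub_eq_add_neg]
  · rw [hm.exp_smul_mul_mul_exp_smul_eq_mul_exp, add_comm]
  · exact hm.exp_smul_mul_mul_exp_smul_eq_exp_mul α β
end

section
/- Let f, g be pure unit quaternions (f² = g² = -1 in ℍ). For quaternions x, y, define x± = ½(x ± f x g). Then the real part of x₊ · conj(y₋) is zero, and the real part of x₋ · conj(y₊) is zero. -/
/-! `Re (a * conj b)` is the Euclidean inner product on `ℍ ≅ ℝ⁴`. Since `f² = g² = -1` forces
`‖f‖ = ‖g‖ = 1`, the map `T x = f x g` is a linear isometry, and it is an involution because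
`f (f x g) g = f² x g² = x`. An isometric involution is self-adjoint, so its `±1`-eigenspaces,
which contain `x₊` and `x₋`, are orthogonal. -/

open scoped InnerProductSpace Quaternion

theorem LinearIsometry.inner_add_apply_sub_apply_eq_zero {𝕜 E : Type*} [RCLike 𝕜]
    [NormedAddCommGroup E] [InnerProductSpace 𝕜 E] (T : E →ₗᵢ[𝕜] E)
    (hT : Function.Involutive T) (x y : E) :
    ⟪x + T x, y - T y⟫_𝕜 = 0 := by
  have hself : ⟪T x, y⟫_𝕜 = ⟪x, T y⟫_𝕜 := by
    rw [← T.inner_map_map x (T y), hT y]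
  rw [inner_add_left, inner_sub_right, inner_sub_right, T.inner_map_map, hself]
  ring

namespace Quaternion

theorem norm_eq_one_of_sq_eq_neg_one {f : ℍ} (hf : f ^ 2 = -1) : ‖f‖ = 1 := by
  have h : ‖f‖ ^ 2 = 1 := by rw [← norm_pow, hf, norm_neg, norm_one]
  exact (pow_eq_one_iff_of_nonneg (norm_nonneg f) two_ne_zero).mp h

noncomputable def sandwich (f g : ℍ) (hf : ‖f‖ = 1) (hg : ‖g‖ = 1) : ℍ →ₗᵢ[ℝ] ℍ where
  toFun x := f * x * g
  map_add' x y := by noncomm_ring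
  map_smul' r x := by simp only [RingHom.id_apply, mul_smul_comm, smul_mul_assoc]
  norm_map' x := by
    simp only [LinearMap.coe_mk, AddHom.coe_mk, norm_mul, hf, hg, one_mul, mul_one]

theorem sandwich_involutive {f g : ℍ} (hf : f ^ 2 = -1) (hg : g ^ 2 = -1) :
    Function.Involutive
      (sandwich f g (norm_eq_one_of_sq_eq_neg_one hf) (norm_eq_one_of_sq_eq_neg_one hg)) := by
  intro x
  change f * (f * x * g) * g = x
  calc f * (f * x * g) * g = f ^ 2 * x * g ^ 2 := by noncomm_ring
    _ = x := by rw [hf, hg]; noncomm_ring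

end Quaternion

/-- Orthogonality of the two ± split parts in the quaternions:
`Re(x₊ conj(y₋)) = 0` and `Re(x₋ conj(y₊)) = 0`. -/
theorem pm_split_orthogonal (f g : Quaternion ℝ) (hf : f ^ 2 = -1) (hg : g ^ 2 = -1)
    (x y : Quaternion ℝ) :
    ((((1 / 2 : ℝ) • (x + f * x * g)) * star ((1 / 2 : ℝ) • (y - f * y * g))).re = 0) ∧
    ((((1 / 2 : ℝ) • (x - f * x * g)) * star ((1 / 2 : ℝ) • (y + f * y * g))).re = 0) := by
  have horth (a b : ℍ) : ⟪a + f * a * g, b - f * b * g⟫_ℝ = 0 :=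
    (Quaternion.sandwich f g _ _).inner_add_apply_sub_apply_eq_zero
      (Quaternion.sandwich_involutive hf hg) a b
  simp only [← Quaternion.inner_def, real_inner_smul_left, real_inner_smul_right]
  constructor
  · rw [horth x y, mul_zero, mul_zero]
  · rw [real_inner_comm, horth y x, mul_zero, mul_zero]
end
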